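/- Let 0 < ε ≤ 1/2, let X ∈ ℝ^{n×d} have full column rank d, let Y ∈ ℝⁿ, and let Π ∈ ℝ^{k×n} be an (ε/3)-subspace embedding for the column space of the augmented matrix [X,Y] ∈ ℝ^{n×(d+1)}. Let γ ∈ ℝᵈ be a minimizer of β ↦ ‖Xβ − Y‖² and let ν ∈ ℝᵈ be a minimizer of β ↦ ‖Π(Xβ − Y)‖². Then ‖γ − ν‖² ≤ (ε² / σ_min(X)²)·‖Xγ − Y‖², where σ_min(X) denotes the smallest singular value of X. -/

import Mathlib

open Matrix

noncomputable section

/-- Squared Euclidean norm of a vector. -/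
def sqNorm {ι : Type*} [Fintype ι] (v : ι → ℝ) : ℝ := ∑ i, (v i) ^ 2

/-- `P` is an `ε`-subspace embedding for the column space of `A`:
for all `x`, `(1-ε)‖Ax‖² ≤ ‖PAx‖² ≤ (1+ε)‖Ax‖²`. -/
def IsSubspaceEmbedding {K N C : Type*} [Fintype K] [Fintype N] [Fintype C]
    (P : Matrix K N ℝ) (A : Matrix N C ℝ) (ε : ℝ) : Prop :=
  ∀ x : C → ℝ,
    (1 - ε) * sqNorm (A.mulVec x) ≤ sqNorm ((P * A).mulVec x) ∧
      sqNorm ((P * A).mulVec x) ≤ (1 + ε) * sqNorm (A.mulVec x)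

/-- The augmented matrix `[X, Y]` obtained by appending the column `Y` to `X`. -/
def augment {n d : ℕ} (X : Matrix (Fin n) (Fin d) ℝ) (Y : Fin n → ℝ) :
    Matrix (Fin n) (Fin (d + 1)) ℝ :=
  Matrix.of fun i => Fin.snoc (X i) (Y i)

/-- The squared smallest singular value of `M`: `σ_min(M)² = inf_{‖x‖ = 1} ‖Mx‖²`. -/
def sigMinSq {N C : Type*} [Fintype N] [Fintype C] (M : Matrix N C ℝ) : ℝ :=
  sInf {r : ℝ | ∃ x : C → ℝ, sqNorm x = 1 ∧ r = sqNorm (M.mulVec x)}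

/-!
With `r = Xγ - Y` and `w = X(ν - γ)`, the normal equations of the two least squares problems give
`⟪w, r⟫ = 0` and `⟪Πw, Πr⟫ = -‖Πw‖²`. Testing the embedding on `w` and on `w ± εr`, all in the
column space of `[X, Y]`, and subtracting the two expansions yields `6‖Πw‖² ≤ ‖w‖² + ε²‖r‖²`,
hence `(5 - 2ε)‖w‖² ≤ ε²‖r‖²` and `‖w‖² ≤ ε²‖r‖²`. Finally `σ_min(X)²‖γ - ν‖² ≤ ‖X(γ - ν)‖² = ‖w‖²`.
-/

section SqNorm

variable {ι : Type*} [Fintype ι]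

lemma sqNorm_eq_dotProduct (v : ι → ℝ) : sqNorm v = v ⬝ᵥ v := by
  simp only [sqNorm, dotProduct, sq]

lemma sqNorm_nonneg (v : ι → ℝ) : 0 ≤ sqNorm v :=
  Finset.sum_nonneg fun i _ => sq_nonneg (v i)

lemma sqNorm_add (u v : ι → ℝ) : sqNorm (u + v) = sqNorm u + 2 * (u ⬝ᵥ v) + sqNorm v := by
  simp only [sqNorm_eq_dotProduct, add_dotProduct, dotProduct_add, dotProduct_comm v u]
  ring

lemma sqNorm_smul (c : ℝ) (v : ι → ℝ) : sqNorm (c • v) = c ^ 2 * sqNorm v := by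
  simp only [sqNorm_eq_dotProduct, smul_dotProduct, dotProduct_smul, smul_eq_mul]
  ring

lemma sqNorm_neg (v : ι → ℝ) : sqNorm (-v) = sqNorm v := by
  simp only [sqNorm_eq_dotProduct, neg_dotProduct, dotProduct_neg, neg_neg]

lemma sqNorm_eq_norm_toLp_sq (v : ι → ℝ) : sqNorm v = ‖WithLp.toLp 2 v‖ ^ 2 := by
  rw [EuclideanSpace.real_norm_sq_eq]
  rfl

end SqNorm

lemma dotProduct_mulVec_eq_zero_of_forall_sqNorm_le {N C : Type*} [Fintype N] [Fintype C]
    (A : Matrix N C ℝ) (b : N → ℝ) {γ : C → ℝ}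
    (hγ : ∀ β, sqNorm (A *ᵥ γ - b) ≤ sqNorm (A *ᵥ β - b)) (u : C → ℝ) :
    (A *ᵥ γ - b) ⬝ᵥ A *ᵥ u = 0 := by
  set r := A *ᵥ γ - b
  have hquad : ∀ t : ℝ, 0 ≤ sqNorm (A *ᵥ u) * (t * t) + 2 * (r ⬝ᵥ A *ᵥ u) * t + 0 := by
    intro t
    have h := hγ (γ + t • u)
    rw [show A *ᵥ (γ + t • u) - b = r + t • A *ᵥ u by
      rw [mulVec_add, mulVec_smul, add_sub_right_comm],
      sqNorm_add, sqNorm_smul, dotProduct_smul, smul_eq_mul] at h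
    nlinarith
  have hdisc := discrim_le_zero hquad
  rw [discrim] at hdisc
  nlinarith [sq_nonneg (r ⬝ᵥ A *ᵥ u)]

theorem Matrix.mulVec_injective_of_rank_eq_card {K m n : Type*} [Field K] [Fintype m]
    [Fintype n] {A : Matrix m n K} (hA : A.rank = Fintype.card n) :
    Function.Injective A.mulVec := by
  have hker : Module.finrank K (LinearMap.ker A.mulVecLin) = 0 := by
    have := LinearMap.finrank_range_add_finrank_ker A.mulVecLin
    rw [← Matrix.rank, hA, Module.finrank_fintype_fun_eq_card] at this
    omega
  exact LinearMap.ker_eq_bot.mp (Submodule.finrank_eq_zero.mp hker)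

section SigMinSq

variable {N C : Type*} [Fintype N] [Fintype C]

lemma sigMinSq_nonneg (M : Matrix N C ℝ) : 0 ≤ sigMinSq M :=
  Real.sInf_nonneg fun _ ⟨_, _, hr⟩ => hr ▸ sqNorm_nonneg _

lemma sigMinSq_mul_sqNorm_le (M : Matrix N C ℝ) (u : C → ℝ) :
    sigMinSq M * sqNorm u ≤ sqNorm (M *ᵥ u) := by
  rcases (sqNorm_nonneg u).eq_or_lt with hu | hu
  · rw [← hu, mul_zero]
    exact sqNorm_nonneg _
  set c := (√(sqNorm u))⁻¹
  have hc : c ^ 2 = (sqNorm u)⁻¹ := by rw [inv_pow, Real.sq_sqrt hu.le]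
  have hle : sigMinSq M ≤ sqNorm (M *ᵥ (c • u)) :=
    csInf_le ⟨0, fun _ ⟨_, _, hr⟩ => hr ▸ sqNorm_nonneg _⟩
      ⟨c • u, by rw [sqNorm_smul, hc, inv_mul_cancel₀ hu.ne'], rfl⟩
  rw [mulVec_smul, sqNorm_smul, hc, inv_mul_eq_div, le_div_iff₀ hu] at hle
  exact hle

lemma exists_pos_mul_sqNorm_le_sqNorm_mulVec {M : Matrix N C ℝ}
    (hM : Function.Injective M.mulVec) : ∃ c > 0, ∀ x, c * sqNorm x ≤ sqNorm (M *ᵥ x) := by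
  classical
  obtain ⟨K, hK, hanti⟩ := (toLpLin 2 2 M).injective_iff_antilipschitz.mp
    fun x y hxy => WithLp.ofLp_injective 2 (hM (congrArg WithLp.ofLp hxy))
  refine ⟨(K ^ 2 : ℝ)⁻¹, by positivity, fun x => ?_⟩
  have h := hanti.le_mul_dist (WithLp.toLp 2 x) 0
  rw [map_zero, dist_zero_right, dist_zero_right] at h
  rw [sqNorm_eq_norm_toLp_sq, sqNorm_eq_norm_toLp_sq, inv_mul_le_iff₀ (by positivity)]
  calc ‖WithLp.toLp 2 x‖ ^ 2 ≤ (K * ‖toLpLin 2 2 M (WithLp.toLp 2 x)‖) ^ 2 := by gcongr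
    _ = _ := by rw [mul_pow, toLpLin_toLp]; rfl

lemma sigMinSq_pos [Nonempty C] {M : Matrix N C ℝ} (hM : Function.Injective M.mulVec) :
    0 < sigMinSq M := by
  classical
  obtain ⟨c, hc, hbound⟩ := exists_pos_mul_sqNorm_le_sqNorm_mulVec hM
  obtain ⟨i⟩ := ‹Nonempty C›
  refine hc.trans_le (le_csInf ⟨_, Pi.single i 1, by simp [sqNorm, Pi.single_apply], rfl⟩ ?_)
  rintro _ ⟨x, hx, rfl⟩
  simpa [hx] using hbound x

lemma sqNorm_le_sqNorm_mulVec_div_sigMinSq {M : Matrix N C ℝ}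
    (hM : Function.Injective M.mulVec) (u : C → ℝ) :
    sqNorm u ≤ sqNorm (M *ᵥ u) / sigMinSq M := by
  cases isEmpty_or_nonempty C
  · rw [Subsingleton.elim u 0, sqNorm_eq_dotProduct, dotProduct_zero]
    exact div_nonneg (sqNorm_nonneg _) (sigMinSq_nonneg M)
  · rw [le_div_iff₀ (sigMinSq_pos hM), mul_comm]
    exact sigMinSq_mul_sqNorm_le M u

end SigMinSq

section Augment

variable {n d : ℕ} (X : Matrix (Fin n) (Fin d) ℝ) (Y : Fin n → ℝ)

lemma augment_mulVec_snoc (v : Fin d → ℝ) (c : ℝ) :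
    augment X Y *ᵥ Fin.snoc v c = X *ᵥ v + c • Y := by
  ext i
  simp only [augment, mulVec, dotProduct, of_apply, Fin.sum_univ_castSucc, Fin.snoc_castSucc,
    Fin.snoc_last, Pi.add_apply, Pi.smul_apply, smul_eq_mul]
  ring

lemma mulVec_mem_range_augment (v : Fin d → ℝ) :
    X *ᵥ v ∈ LinearMap.range (augment X Y).mulVecLin :=
  ⟨Fin.snoc v 0, by rw [mulVecLin_apply, augment_mulVec_snoc, zero_smul, add_zero]⟩

lemma mem_range_augment : Y ∈ LinearMap.range (augment X Y).mulVecLin :=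
  ⟨Fin.snoc 0 1, by rw [mulVecLin_apply, augment_mulVec_snoc, mulVec_zero, one_smul, zero_add]⟩

end Augment

namespace IsSubspaceEmbedding

variable {K N C : Type*} [Fintype K] [Fintype N] [Fintype C]
  {P : Matrix K N ℝ} {A : Matrix N C ℝ}

lemma sqNorm_mulVec_bounds {δ : ℝ} (hP : IsSubspaceEmbedding P A δ) {z : N → ℝ}
    (hz : z ∈ LinearMap.range A.mulVecLin) :
    (1 - δ) * sqNorm z ≤ sqNorm (P *ᵥ z) ∧ sqNorm (P *ᵥ z) ≤ (1 + δ) * sqNorm z := by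
  obtain ⟨x, rfl⟩ := hz
  simpa only [mulVecLin_apply, mulVec_mulVec] using hP x

theorem sqNorm_le_sq_mul_sqNorm_of_dotProduct_eq_zero {ε : ℝ}
    (hP : IsSubspaceEmbedding P A (ε / 3)) (hε : 0 < ε) (hε' : ε ≤ 2) {w r : N → ℝ}
    (hw : w ∈ LinearMap.range A.mulVecLin) (hr : r ∈ LinearMap.range A.mulVecLin)
    (hwr : w ⬝ᵥ r = 0) (hPwr : P *ᵥ (w + r) ⬝ᵥ P *ᵥ w = 0) :
    sqNorm w ≤ ε ^ 2 * sqNorm r := by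
  have hPwr' : P *ᵥ w ⬝ᵥ P *ᵥ r = -sqNorm (P *ᵥ w) := by
    rw [mulVec_add, add_dotProduct, dotProduct_comm (P *ᵥ r), ← sqNorm_eq_dotProduct] at hPwr
    linarith
  have hsq (c : ℝ) : sqNorm (w + c • r) = sqNorm w + c ^ 2 * sqNorm r := by
    rw [sqNorm_add, sqNorm_smul, dotProduct_smul, hwr, smul_zero]
    ring
  have hPsq (c : ℝ) :
      sqNorm (P *ᵥ (w + c • r)) = (1 - 2 * c) * sqNorm (P *ᵥ w) + c ^ 2 * sqNorm (P *ᵥ r) := by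
    rw [mulVec_add, mulVec_smul, sqNorm_add, sqNorm_smul, dotProduct_smul, hPwr', smul_eq_mul]
    ring
  have hmem (c : ℝ) : w + c • r ∈ LinearMap.range A.mulVecLin :=
    add_mem hw (Submodule.smul_mem _ c hr)
  obtain ⟨hlow, -⟩ := hP.sqNorm_mulVec_bounds hw
  obtain ⟨hplus, -⟩ := hP.sqNorm_mulVec_bounds (hmem ε)
  obtain ⟨-, hminus⟩ := hP.sqNorm_mulVec_bounds (hmem (-ε))
  rw [hsq, hPsq] at hplus hminus
  have hPw : 6 * sqNorm (P *ᵥ w) ≤ sqNorm w + ε ^ 2 * sqNorm r := by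
    refine le_of_mul_le_mul_left ?_ hε
    nlinarith
  nlinarith [sqNorm_nonneg w]

end IsSubspaceEmbedding

/-- Bound on the distance between the original and the sketched least squares
minimizers: `‖γ − ν‖² ≤ (ε²/σ_min(X)²)·‖Xγ − Y‖²`. -/
theorem sketched_least_squares_mean_bound {n d k : ℕ} {ε : ℝ} (hε : 0 < ε) (hε' : ε ≤ 1 / 2)
    (X : Matrix (Fin n) (Fin d) ℝ) (hrank : X.rank = d) (Y : Fin n → ℝ)
    (P : Matrix (Fin k) (Fin n) ℝ)
    (hP : IsSubspaceEmbedding P (augment X Y) (ε / 3))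
    (γ ν : Fin d → ℝ)
    (hγ : ∀ β : Fin d → ℝ, sqNorm (X.mulVec γ - Y) ≤ sqNorm (X.mulVec β - Y))
    (hν : ∀ β : Fin d → ℝ,
      sqNorm (P.mulVec (X.mulVec ν - Y)) ≤ sqNorm (P.mulVec (X.mulVec β - Y))) :
    sqNorm (γ - ν) ≤ ε ^ 2 / sigMinSq X * sqNorm (X.mulVec γ - Y) := by
  set r := X *ᵥ γ - Y
  set w := X *ᵥ (ν - γ)
  have hwr : w ⬝ᵥ r = 0 := by
    rw [dotProduct_comm]
    exact dotProduct_mulVec_eq_zero_of_forall_sqNorm_le X Y hγ (ν - γ)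
  have hPwr : P *ᵥ (w + r) ⬝ᵥ P *ᵥ w = 0 := by
    simp only [mulVec_sub, mulVec_mulVec] at hν
    have hsum : w + r = X *ᵥ ν - Y := by simp only [w, r, mulVec_sub]; abel
    rw [hsum, mulVec_sub, mulVec_mulVec, mulVec_mulVec]
    exact dotProduct_mulVec_eq_zero_of_forall_sqNorm_le (P * X) (P *ᵥ Y) hν (ν - γ)
  have hkey : sqNorm w ≤ ε ^ 2 * sqNorm r :=
    hP.sqNorm_le_sq_mul_sqNorm_of_dotProduct_eq_zero hε (by linarith)
      (mulVec_mem_range_augment X Y _)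
      (sub_mem (mulVec_mem_range_augment X Y γ) (mem_range_augment X Y)) hwr hPwr
  have hinj : Function.Injective X.mulVec :=
    mulVec_injective_of_rank_eq_card (by rw [hrank, Fintype.card_fin])
  calc sqNorm (γ - ν) ≤ sqNorm (X *ᵥ (γ - ν)) / sigMinSq X :=
        sqNorm_le_sqNorm_mulVec_div_sigMinSq hinj _
    _ = sqNorm w / sigMinSq X := by rw [← neg_sub, mulVec_neg, sqNorm_neg]
    _ ≤ ε ^ 2 * sqNorm r / sigMinSq X := by gcongr; exact sigMinSq_nonneg X
    _ = ε ^ 2 / sigMinSq X * sqNorm r := by ring
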